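/- arXiv:1901.09456 — 2 statements merged into one kernel-verified Lean document; each statement's English description precedes it below -/
import Mathlib

section
/- Let n ≥ 2, let 1 ≤ k ≤ n, let q ≥ 1 be an integer, let D be an n×n real diagonal matrix with positive diagonal entries, and let κ̂ ≥ 1 satisfy κ(D) ≤ κ̂. Then the standard error σ̂(S_Y) = √(Var(Y_k(D))/q) of the q-sample mean of log-minors satisfies σ̂(S_Y) ≤ (1/2)·√(k(n−k)/(q(n−1)))·log κ̂. -/
open Matrix Real Finset

/-- The log-determinant of the principal submatrix of `M` indexed by `s`. -/
noncomputable def logMinor {n : ℕ} (M : Matrix (Fin n) (Fin n) ℝ) (s : Finset (Fin n)) : ℝ :=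
  Real.log (M.submatrix (fun i : {x // x ∈ s} => (i : Fin n))
    (fun i : {x // x ∈ s} => (i : Fin n))).det

/-- The mean of `Y_k(M)`, the log-minor of a uniformly random `k`-element index set. -/
noncomputable def meanLM {n : ℕ} (k : ℕ) (M : Matrix (Fin n) (Fin n) ℝ) : ℝ :=
  (∑ s ∈ Finset.powersetCard k (Finset.univ : Finset (Fin n)), logMinor M s) / (n.choose k)

/-- The variance of `Y_k(M)` under the uniform distribution on `k`-element index sets. -/
noncomputable def varLM {n : ℕ} (k : ℕ) (M : Matrix (Fin n) (Fin n) ℝ) : ℝ :=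
  (∑ s ∈ Finset.powersetCard k (Finset.univ : Finset (Fin n)),
    (logMinor M s - meanLM k M) ^ 2) / (n.choose k)

open Classical in
/-- `P(|Y_k(M) - E[Y_k(M)]| ≥ r)` under the uniform distribution on `k`-element index sets. -/
noncomputable def probDevLM {n : ℕ} (k : ℕ) (M : Matrix (Fin n) (Fin n) ℝ) (r : ℝ) : ℝ :=
  (((Finset.powersetCard k (Finset.univ : Finset (Fin n))).filter
      (fun s => r ≤ |logMinor M s - meanLM k M|)).card : ℝ) / (n.choose k)

/-- The largest eigenvalue `λ₁(M)` of a Hermitian matrix. -/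
noncomputable def maxEig {n : ℕ} {M : Matrix (Fin n) (Fin n) ℝ} (hM : M.IsHermitian) : ℝ :=
  ⨆ i, hM.eigenvalues i

/-- The smallest eigenvalue `λₙ(M)` of a Hermitian matrix. -/
noncomputable def minEig {n : ℕ} {M : Matrix (Fin n) (Fin n) ℝ} (hM : M.IsHermitian) : ℝ :=
  ⨅ i, hM.eigenvalues i

/-- The condition number `κ(M) = λ₁(M) / λₙ(M)` of a Hermitian matrix. -/
noncomputable def condNum {n : ℕ} {M : Matrix (Fin n) (Fin n) ℝ} (hM : M.IsHermitian) : ℝ :=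
  maxEig hM / minEig hM

/-!
For diagonal `D` the log-minor of an index set `I` is `∑ i ∈ I, log dᵢ`, so `Y_k(D)` is the sum of a
sample of size `k` drawn without replacement from the population `xᵢ = log dᵢ`. Counting the
`k`-sets through one index (`C(n-1, k-1)`) and through two (`C(n-2, k-2)`) gives the classical
formula: the variance of the sample sum is `k (n - k) / (n - 1)` times the population variance.
By Popoviciu's inequality the population variance is at most `(max x - min x)² / 4`, and
`max x - min x = log κ(D) ≤ log κ̂`.
-/

namespace Finset

theorem sum_sub_sum_div_card_sq {α : Type*} (s : Finset α) (f : α → ℝ) :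
    ∑ a ∈ s, (f a - (∑ b ∈ s, f b) / #s) ^ 2 = ∑ a ∈ s, f a ^ 2 - (∑ a ∈ s, f a) ^ 2 / #s := by
  simp only [sub_sq, sum_add_distrib, sum_sub_distrib, ← sum_mul, ← mul_sum, sum_const,
    nsmul_eq_mul]
  rcases eq_or_ne (#s : ℝ) 0 with hs | hs
  · simp [hs]
  · field_simp
    ring

theorem sum_sq_sub_sq_sum_div_card_le_sum_sub_sq {α : Type*} (s : Finset α) (f : α → ℝ) (c : ℝ) :
    ∑ a ∈ s, f a ^ 2 - (∑ a ∈ s, f a) ^ 2 / #s ≤ ∑ a ∈ s, (f a - c) ^ 2 := by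
  rcases s.eq_empty_or_nonempty with rfl | hs
  · simp
  have hs : (#s : ℝ) ≠ 0 := by exact_mod_cast hs.card_pos.ne'
  have hsplit : ∑ a ∈ s, (f a - c) ^ 2 =
      ∑ a ∈ s, f a ^ 2 - (∑ a ∈ s, f a) ^ 2 / #s + (∑ a ∈ s, f a - #s * c) ^ 2 / #s := by
    simp only [sub_sq, sum_add_distrib, sum_sub_distrib, ← sum_mul, ← mul_sum, sum_const,
      nsmul_eq_mul]
    field_simp
    ring
  rw [hsplit, le_add_iff_nonneg_right]
  positivity

theorem sum_sq_sub_sq_sum_div_card_le_of_sub_le {α : Type*} {s : Finset α} {f : α → ℝ} {L : ℝ}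
    (hf : ∀ a ∈ s, ∀ b ∈ s, f a - f b ≤ L) :
    ∑ a ∈ s, f a ^ 2 - (∑ a ∈ s, f a) ^ 2 / #s ≤ #s * (L / 2) ^ 2 := by
  rcases s.eq_empty_or_nonempty with rfl | hs
  · simp
  obtain ⟨b, hb, hmin⟩ := s.exists_min_image f hs
  calc ∑ a ∈ s, f a ^ 2 - (∑ a ∈ s, f a) ^ 2 / #s
      ≤ ∑ a ∈ s, (f a - (f b + L / 2)) ^ 2 := sum_sq_sub_sq_sum_div_card_le_sum_sub_sq s f _
    _ ≤ ∑ _a ∈ s, (L / 2) ^ 2 := sum_le_sum fun a ha => by nlinarith [hmin a ha, hf a ha b hb]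
    _ = #s * (L / 2) ^ 2 := by rw [sum_const, nsmul_eq_mul]

variable {ι : Type*} [DecidableEq ι] {u : Finset ι} {k : ℕ}

theorem card_filter_mem_powersetCard {i : ι} (hi : i ∈ u) (hk : 1 ≤ k) :
    #{s ∈ powersetCard k u | i ∈ s} = (#u - 1).choose (k - 1) := by
  simpa using card_filter_powersetCard_subset {i} u k (singleton_subset_iff.2 hi) (by simpa)

theorem card_sub_one_mul_card_filter_mem_and_mem_powersetCard {i j : ι} (hi : i ∈ u) (hj : j ∈ u)
    (hij : i ≠ j) :
    (#u - 1) * #{s ∈ powersetCard k u | i ∈ s ∧ j ∈ s} = (k - 1) * (#u - 1).choose (k - 1) := by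
  have hu : 2 ≤ #u := one_lt_card.2 ⟨i, hi, j, hj, hij⟩
  rcases Nat.lt_or_ge k 2 with hk | hk
  · have hempty : {s ∈ powersetCard k u | i ∈ s ∧ j ∈ s} = ∅ := by
      refine filter_false_of_mem fun s hs ⟨his, hjs⟩ => ?_
      have := one_lt_card.2 ⟨i, his, j, hjs, hij⟩
      rw [(mem_powersetCard.1 hs).2] at this
      omega
    rw [hempty, card_empty, Nat.sub_eq_zero_of_le (by omega : k ≤ 1), mul_zero, zero_mul]
  · have hpair : {i, j} ⊆ u := insert_subset hi (singleton_subset_iff.2 hj)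
    have hcard : #{i, j} = 2 := card_pair hij
    have hcount := card_filter_powersetCard_subset {i, j} u k hpair (by omega)
    simp only [insert_subset_iff, singleton_subset_iff, hcard] at hcount
    rw [hcount]
    have := Nat.add_one_mul_choose_eq (#u - 2) (k - 2)
    rw [show #u - 2 + 1 = #u - 1 by omega, show k - 2 + 1 = k - 1 by omega] at this
    rw [this, mul_comm]

variable (u k) (x : ι → ℝ)

theorem sum_powersetCard_sum (hk : 1 ≤ k) :
    ∑ s ∈ powersetCard k u, ∑ i ∈ s, x i = (#u - 1).choose (k - 1) * ∑ i ∈ u, x i := by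
  rw [sum_comm' (t' := u) (s' := fun i => {s ∈ powersetCard k u | i ∈ s})
    (fun s i => by grind), mul_sum]
  refine sum_congr rfl fun i hi => ?_
  rw [sum_const, card_filter_mem_powersetCard hi hk, nsmul_eq_mul]

theorem sum_powersetCard_sum_sq_eq_sum_sum_card_mul :
    ∑ s ∈ powersetCard k u, (∑ i ∈ s, x i) ^ 2 =
      ∑ i ∈ u, ∑ j ∈ u, (#{s ∈ powersetCard k u | i ∈ s ∧ j ∈ s} : ℝ) * (x i * x j) := by
  simp_rw [sq, sum_mul_sum]
  rw [sum_comm' (t' := u) (s' := fun i => {s ∈ powersetCard k u | i ∈ s})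
    (fun s i => by grind)]
  refine sum_congr rfl fun i hi => ?_
  rw [sum_comm' (t' := u) (s' := fun j => {s ∈ powersetCard k u | i ∈ s ∧ j ∈ s})
    (fun s j => by grind)]
  simp only [sum_const, nsmul_eq_mul]

theorem card_sub_one_mul_sum_powersetCard_sum_sq (hk : 1 ≤ k) :
    ((#u : ℝ) - 1) * ∑ s ∈ powersetCard k u, (∑ i ∈ s, x i) ^ 2 =
      ((#u - 1).choose (k - 1) : ℝ) *
        (((#u : ℝ) - k) * ∑ i ∈ u, x i ^ 2 + ((k : ℝ) - 1) * (∑ i ∈ u, x i) ^ 2) := by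
  have hrow : ∀ i ∈ u, ((#u : ℝ) - 1) *
      ∑ j ∈ u, (#{s ∈ powersetCard k u | i ∈ s ∧ j ∈ s} : ℝ) * (x i * x j) =
        ((#u - 1).choose (k - 1) : ℝ) *
          (((#u : ℝ) - k) * x i ^ 2 + ((k : ℝ) - 1) * (x i * ∑ j ∈ u, x j)) := by
    intro i hi
    have hu : 1 ≤ #u := card_pos.2 ⟨i, hi⟩
    have hoff : ∀ j ∈ u.erase i, ((#u : ℝ) - 1) *
        ((#{s ∈ powersetCard k u | i ∈ s ∧ j ∈ s} : ℝ) * (x i * x j)) =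
          ((k : ℝ) - 1) * (#u - 1).choose (k - 1) * (x i * x j) := by
      intro j hj
      have hcount := congrArg (Nat.cast : ℕ → ℝ)
        (card_sub_one_mul_card_filter_mem_and_mem_powersetCard (k := k) hi
          (mem_of_mem_erase hj) (ne_of_mem_erase hj).symm)
      push_cast [Nat.cast_sub hu, Nat.cast_sub hk] at hcount
      rw [← mul_assoc, hcount]
    rw [← add_sum_erase u _ hi, mul_add, mul_sum, sum_congr rfl hoff, ← mul_sum, ← mul_sum,
      sum_erase_eq_sub hi]
    simp only [and_self, card_filter_mem_powersetCard hi hk]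
    ring
  rw [sum_powersetCard_sum_sq_eq_sum_sum_card_mul, mul_sum, sum_congr rfl hrow, ← mul_sum,
    sum_add_distrib, ← mul_sum, ← mul_sum, ← sum_mul, sq (∑ i ∈ u, x i)]

theorem sum_powersetCard_sum_sub_mean_sq_div (hk : 1 ≤ k) (hku : k ≤ #u) (hu : 2 ≤ #u) :
    (∑ s ∈ powersetCard k u,
        (∑ i ∈ s, x i - (∑ t ∈ powersetCard k u, ∑ i ∈ t, x i) / (#u).choose k) ^ 2) /
          (#u).choose k =
      k * ((#u : ℝ) - k) / (#u * ((#u : ℝ) - 1)) *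
        (∑ i ∈ u, x i ^ 2 - (∑ i ∈ u, x i) ^ 2 / #u) := by
  have hN : ((#u).choose k : ℝ) ≠ 0 := by exact_mod_cast (Nat.choose_pos hku).ne'
  have hn : (#u : ℝ) ≠ 0 := by exact_mod_cast (by omega : #u ≠ 0)
  have hn1 : (#u : ℝ) - 1 ≠ 0 := by
    have : (2 : ℝ) ≤ #u := by exact_mod_cast hu
    linarith
  have hc : ((#u - 1).choose (k - 1) : ℝ) = k * (#u).choose k / #u := by
    rw [eq_div_iff hn]
    have := Nat.add_one_mul_choose_eq (#u - 1) (k - 1)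
    rw [Nat.sub_add_cancel (by omega), Nat.sub_add_cancel hk] at this
    exact_mod_cast (mul_comm _ _).trans (this.trans (mul_comm _ _))
  have hsq : ∑ s ∈ powersetCard k u, (∑ i ∈ s, x i) ^ 2 =
      ((#u - 1).choose (k - 1) : ℝ) *
        (((#u : ℝ) - k) * ∑ i ∈ u, x i ^ 2 + ((k : ℝ) - 1) * (∑ i ∈ u, x i) ^ 2) / (#u - 1) := by
    rw [eq_div_iff hn1, mul_comm, card_sub_one_mul_sum_powersetCard_sum_sq u k x hk]
  rw [← card_powersetCard k u, sum_sub_sum_div_card_sq, card_powersetCard,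
    sum_powersetCard_sum u k x hk, hsq, hc]
  field_simp
  ring

end Finset

theorem logMinor_diagonal {n : ℕ} (d : Fin n → ℝ) (s : Finset (Fin n)) (hd : ∀ i ∈ s, d i ≠ 0) :
    logMinor (diagonal d) s = ∑ i ∈ s, log (d i) := by
  rw [logMinor, submatrix_diagonal _ _ Subtype.val_injective, det_diagonal, Function.comp_def,
    prod_coe_sort s d, log_prod hd]

theorem varLM_diagonal {n k : ℕ} (hn : 2 ≤ n) (hk1 : 1 ≤ k) (hkn : k ≤ n) (d : Fin n → ℝ)
    (hd : ∀ i, d i ≠ 0) :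
    varLM k (diagonal d) = k * ((n : ℝ) - k) / (n * ((n : ℝ) - 1)) *
      (∑ i, log (d i) ^ 2 - (∑ i, log (d i)) ^ 2 / n) := by
  have h := sum_powersetCard_sum_sub_mean_sq_div univ k (fun i => log (d i)) hk1
    (by simpa) (by simpa)
  simp only [card_univ, Fintype.card_fin] at h
  simpa only [varLM, meanLM, logMinor_diagonal d _ fun i _ => hd i] using h

theorem log_sub_log_le_log_of_ciSup_div_ciInf_le {ι : Type*} [Finite ι] {d : ι → ℝ}
    (hd : ∀ i, 0 < d i) {K : ℝ} (hK : (⨆ i, d i) / (⨅ i, d i) ≤ K) (i j : ι) :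
    log (d i) - log (d j) ≤ log K := by
  have : Nonempty ι := ⟨i⟩
  obtain ⟨m, hm⟩ := exists_eq_ciInf_of_finite (f := d)
  have hinf : 0 < ⨅ i, d i := hm ▸ hd m
  rw [← log_div (hd i).ne' (hd j).ne']
  refine log_le_log (div_pos (hd i) (hd j)) (le_trans ?_ hK)
  have hle_sup := le_ciSup (Finite.bddAbove_range d) i
  exact div_le_div₀ ((hd i).le.trans hle_sup) hle_sup hinf (ciInf_le (Finite.bddBelow_range d) j)

theorem varLM_diagonal_le {n k : ℕ} (hn : 2 ≤ n) (hk1 : 1 ≤ k) (hkn : k ≤ n) {d : Fin n → ℝ}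
    (hd : ∀ i, 0 < d i) {K : ℝ} (hK : (⨆ i, d i) / (⨅ i, d i) ≤ K) :
    varLM k (diagonal d) ≤ k * ((n : ℝ) - k) / ((n : ℝ) - 1) * (log K / 2) ^ 2 := by
  have hpop := sum_sq_sub_sq_sum_div_card_le_of_sub_le (s := univ)
    fun i _ j _ => log_sub_log_le_log_of_ciSup_div_ciInf_le hd hK i j
  rw [card_univ, Fintype.card_fin] at hpop
  have hnR : (2 : ℝ) ≤ n := by exact_mod_cast hn
  have hknR : (k : ℝ) ≤ n := by exact_mod_cast hkn
  have hcoeff : 0 ≤ k * ((n : ℝ) - k) / (n * ((n : ℝ) - 1)) :=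
    div_nonneg (by nlinarith) (by nlinarith)
  calc varLM k (diagonal d)
      ≤ k * ((n : ℝ) - k) / (n * ((n : ℝ) - 1)) * (n * (log K / 2) ^ 2) := by
        rw [varLM_diagonal hn hk1 hkn d fun i => (hd i).ne']
        gcongr
    _ = k * ((n : ℝ) - k) / ((n : ℝ) - 1) * (log K / 2) ^ 2 := by field_simp

theorem standard_error_bound_diagonal_general {n k : ℕ} (hn : 2 ≤ n) (hk1 : 1 ≤ k) (hkn : k ≤ n)
    (q : ℕ)
    (d : Fin n → ℝ) (hd : ∀ i, 0 < d i) (khat : ℝ)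
    (hcond : (⨆ i, d i) / (⨅ i, d i) ≤ khat) :
    Real.sqrt (varLM k (Matrix.diagonal d) / q) ≤
      (1 / 2) * Real.sqrt ((k : ℝ) * ((n : ℝ) - (k : ℝ)) / ((q : ℝ) * ((n : ℝ) - 1))) *
        Real.log khat := by
  have hlog : 0 ≤ log khat := by
    simpa using log_sub_log_le_log_of_ciSup_div_ciInf_le hd hcond ⟨0, by omega⟩ ⟨0, by omega⟩
  calc √(varLM k (diagonal d) / q)
      ≤ √(k * ((n : ℝ) - k) / (q * ((n : ℝ) - 1)) * (log khat / 2) ^ 2) := by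
        refine sqrt_le_sqrt ?_
        rw [mul_comm (q : ℝ), ← div_div, div_mul_eq_mul_div]
        gcongr
        exact varLM_diagonal_le hn hk1 hkn hd hcond
    _ = 1 / 2 * √(k * ((n : ℝ) - k) / (q * ((n : ℝ) - 1))) * log khat := by
        rw [sqrt_mul' _ (sq_nonneg _), sqrt_sq (by positivity)]
        ring

theorem standard_error_bound_diagonal {n k : ℕ} (hn : 2 ≤ n) (hk1 : 1 ≤ k) (hkn : k ≤ n)
    (q : ℕ) (hq : 1 ≤ q)
    (d : Fin n → ℝ) (hd : ∀ i, 0 < d i) (khat : ℝ) (hkhat : 1 ≤ khat)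
    (hcond : (⨆ i, d i) / (⨅ i, d i) ≤ khat) :
    Real.sqrt (varLM k (Matrix.diagonal d) / q) ≤
      (1 / 2) * Real.sqrt ((k : ℝ) * ((n : ℝ) - (k : ℝ)) / ((q : ℝ) * ((n : ℝ) - 1))) *
        Real.log khat :=
  standard_error_bound_diagonal_general hn hk1 hkn q d hd khat hcond
end

section
/- Let n ≥ 2, let 1 ≤ k < n, let q ≥ 1 be an integer, let M be an n×n real symmetric positive-definite matrix with λₙ(M) ≥ 1 and ℓ(M) = min{|log λ₁(M)|, |log λₙ(M)|} > 0, and let κ̂ > 1 satisfy κ(M) ≤ κ̂. Define the subsystem entropy h(M_I) = (1/2)·log det(M_I) + (k/2)·(1 + log(2π)) for each k-element index subset I, and let c_v(S_h) = √(Var(h(M_I))/q)/E[h(M_I)] (mean and variance over a uniformly random k-element subset I) be the coefficient of variation of the q-sample mean of subsystem entropy. Then c_v(S_h) ≤ (2·log κ̂/(ℓ(M) + log(2eπ)))·√(6(n−k)/(qkn)). -/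
open Matrix Real Finset

/-- `ℓ(M) = min{|log λ₁(M)|, |log λₙ(M)|}`. -/
noncomputable def ellM {n : ℕ} {M : Matrix (Fin n) (Fin n) ℝ} (hM : M.IsHermitian) : ℝ :=
  min |Real.log (maxEig hM)| |Real.log (minEig hM)|

/-- The differential entropy `h(M_I) = (1/2) log det M_I + (k/2)(1 + log(2π))`. -/
noncomputable def entMinor {n : ℕ} (k : ℕ) (M : Matrix (Fin n) (Fin n) ℝ)
    (s : Finset (Fin n)) : ℝ :=
  (1 / 2) * logMinor M s + ((k : ℝ) / 2) * (1 + Real.log (2 * Real.pi))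

/-- The mean of the subsystem entropy over a uniformly random `k`-element index set. -/
noncomputable def meanEnt {n : ℕ} (k : ℕ) (M : Matrix (Fin n) (Fin n) ℝ) : ℝ :=
  (∑ s ∈ Finset.powersetCard k (Finset.univ : Finset (Fin n)), entMinor k M s) / (n.choose k)

/-- The variance of the subsystem entropy over a uniformly random `k`-element index set. -/
noncomputable def varEnt {n : ℕ} (k : ℕ) (M : Matrix (Fin n) (Fin n) ℝ) : ℝ :=
  (∑ s ∈ Finset.powersetCard k (Finset.univ : Finset (Fin n)),
    (entMinor k M s - meanEnt k M) ^ 2) / (n.choose k)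

/-!
Adding an index `i` to an index set `S` multiplies `det M_S` by the Schur complement of `M_S` in
`M_{S ∪ {i}}`, a scalar lying between `λₙ(M)` and `λ₁(M)` because `λₙ • 1 ≤ M ≤ λ₁ • 1` in the
Loewner order. Hence `log det M_I ≥ k log λₙ = k ℓ(M)` (as `λₙ ≥ 1`), and exchanging one index of
`I` changes `log det M_I` by at most `log κ(M)`. A function on the `k`-subsets of an `n`-set that
changes by at most `L` under such exchanges has variance at most `k (n - k) / n · L²`, by induction
on `n`: split the subsets according to whether they contain a fixed element and apply the law of
total variance. As `h(M_I) = ½ log det M_I + const`, this gives `Var h ≤ k (n - k) / (4n) · log² κ̂`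
and `E h ≥ k (ℓ(M) + log 2eπ) / 2`.
-/

open scoped MatrixOrder ComplexOrder BigOperators

namespace Matrix

section Loewner

variable {ι m 𝕜 : Type*} [DecidableEq ι] [DecidableEq m] [RCLike 𝕜] {M : Matrix ι ι 𝕜} {c : ℝ}

lemma IsHermitian.smul_one_le [Fintype ι] (hM : M.IsHermitian) (h : ∀ i, c ≤ hM.eigenvalues i) :
    c • 1 ≤ M := by
  rw [← Algebra.algebraMap_eq_smul_one, algebraMap_le_iff_le_spectrum hM.isSelfAdjoint,
    hM.spectrum_real_eq_range_eigenvalues]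
  rintro _ ⟨i, rfl⟩
  exact h i

lemma IsHermitian.le_smul_one [Fintype ι] (hM : M.IsHermitian) (h : ∀ i, hM.eigenvalues i ≤ c) :
    M ≤ c • 1 := by
  rw [← Algebra.algebraMap_eq_smul_one, le_algebraMap_iff_spectrum_le hM.isSelfAdjoint,
    hM.spectrum_real_eq_range_eigenvalues]
  rintro _ ⟨i, rfl⟩
  exact h i

lemma posDef_of_smul_one_le (hc : 0 < c) (h : c • 1 ≤ M) : M.PosDef := by
  rw [← sub_add_cancel M (c • 1)]
  exact PosDef.posSemidef_add (le_iff.mp h) (PosDef.one.smul hc)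

lemma smul_one_le_submatrix (h : c • 1 ≤ M) {f : m → ι} (hf : Function.Injective f) :
    c • 1 ≤ M.submatrix f f := by
  simpa [le_iff, submatrix_sub, submatrix_smul, submatrix_one f hf] using h.submatrix f

lemma submatrix_le_smul_one (h : M ≤ c • 1) {f : m → ι} (hf : Function.Injective f) :
    M.submatrix f f ≤ c • 1 := by
  simpa [le_iff, submatrix_sub, submatrix_smul, submatrix_one f hf] using h.submatrix f

end Loewner

lemma IsHermitian.submatrix_sumElim {ι m n α : Type*} [Star α] {M : Matrix ι ι α}
    (hM : M.IsHermitian) (f : m → ι) (g : n → ι) :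
    M.submatrix (Sum.elim f g) (Sum.elim f g) =
      Matrix.fromBlocks (M.submatrix f f) (M.submatrix f g) (M.submatrix f g)ᴴ
        (M.submatrix g g) := by
  ext (x | x) (y | y) <;> simp [hM.apply]

section SchurComplement

variable {m n : Type*} [Fintype m] [DecidableEq m] [Fintype n] [DecidableEq n]
  {A : Matrix m m ℝ} {B : Matrix m n ℝ} {D : Matrix n n ℝ}

lemma dotProduct_sub_smul_one_mulVec (X : Matrix n n ℝ) (a : ℝ) (v : n → ℝ) :
    star v ⬝ᵥ ((X - a • 1) *ᵥ v) = star v ᵥ* X ⬝ᵥ v - a * (v ⬝ᵥ v) := by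
  simp [sub_mulVec, dotProduct_mulVec, smul_mulVec]

lemma smul_one_le_schur_complement {a : ℝ} (ha : 0 < a) (h : a • 1 ≤ fromBlocks A B Bᴴ D) :
    a • 1 ≤ D - Bᴴ * A⁻¹ * B := by
  have hX := posDef_of_smul_one_le ha h
  have hA : A.PosDef := hX.submatrix Sum.inl_injective
  have : Invertible A := hA.isUnit.invertible
  refine le_iff.mpr (.of_dotProduct_mulVec_nonneg
    (((IsHermitian.fromBlocks₁₁ B D hA.1).mp hX.1).sub
      (isHermitian_one.smul (IsSelfAdjoint.all a))) fun y => ?_)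
  -- the quadratic form of the block matrix at `(-A⁻¹ B y, y)` is that of the Schur complement
  set x := -((A⁻¹ * B) *ᵥ y)
  have hq := (le_iff.mp h).dotProduct_mulVec_nonneg (x ⊕ᵥ y)
  have hS := schur_complement_eq₁₁ B D x y hA.1
  rw [neg_add_cancel, dotProduct_zero, zero_add] at hS
  rw [dotProduct_sub_smul_one_mulVec, hS] at hq
  rw [dotProduct_sub_smul_one_mulVec]
  have : y ⬝ᵥ y ≤ (x ⊕ᵥ y) ⬝ᵥ (x ⊕ᵥ y) := by
    rw [sumElim_dotProduct_sumElim]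
    simpa using dotProduct_star_self_nonneg x
  nlinarith

lemma schur_complement_le_smul_one (hA : A.PosDef) {b : ℝ} (h : fromBlocks A B Bᴴ D ≤ b • 1) :
    D - Bᴴ * A⁻¹ * B ≤ b • 1 := by
  have hD : (b • 1 - D).PosSemidef := by
    have hsub : (b • 1 - fromBlocks A B Bᴴ D).submatrix Sum.inr Sum.inr = b • 1 - D := by
      ext i j
      simp [one_apply]
    exact hsub ▸ (le_iff.mp h).submatrix Sum.inr
  rw [le_iff, sub_sub_eq_add_sub, add_sub_right_comm]
  exact hD.add (hA.inv.posSemidef.conjTranspose_mul_mul_same B)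

end SchurComplement

section SchurComplementUnit

variable {m : Type*} [Fintype m] [DecidableEq m]
  {A : Matrix m m ℝ} {B : Matrix m Unit ℝ} {D : Matrix Unit Unit ℝ}

lemma det_fromBlocks_unit (hA : IsUnit A.det) (C : Matrix Unit m ℝ) :
    (fromBlocks A B C D).det = A.det * (D - C * A⁻¹ * B) () () := by
  let _ := invertibleOfIsUnitDet A hA
  rw [det_fromBlocks₁₁, invOf_eq_nonsing_inv, det_unique (D - C * A⁻¹ * B)]

lemma smul_det_le_det_fromBlocks {a : ℝ} (ha : 0 < a) (h : a • 1 ≤ fromBlocks A B Bᴴ D) :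
    a * A.det ≤ (fromBlocks A B Bᴴ D).det := by
  have hA : A.PosDef := (posDef_of_smul_one_le ha h).submatrix Sum.inl_injective
  have hS := (le_iff.mp (smul_one_le_schur_complement ha h)).diag_nonneg (i := ())
  rw [det_fromBlocks_unit hA.det_pos.ne'.isUnit]
  simp only [sub_apply, smul_apply, one_apply_eq, smul_eq_mul, mul_one, sub_nonneg] at hS ⊢
  nlinarith [hA.det_pos]

lemma det_fromBlocks_le_smul_det (hA : A.PosDef) {b : ℝ} (h : fromBlocks A B Bᴴ D ≤ b • 1) :
    (fromBlocks A B Bᴴ D).det ≤ b * A.det := by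
  have hS := (le_iff.mp (schur_complement_le_smul_one hA h)).diag_nonneg (i := ())
  rw [det_fromBlocks_unit hA.det_pos.ne'.isUnit]
  simp only [sub_apply, smul_apply, one_apply_eq, smul_eq_mul, mul_one, sub_nonneg] at hS ⊢
  nlinarith [hA.det_pos]

end SchurComplementUnit

lemma det_submatrix_insert_mem_Icc {ι : Type*} [Fintype ι] [DecidableEq ι] {M : Matrix ι ι ℝ}
    {a b : ℝ} (ha : 0 < a) (haM : a • 1 ≤ M) (hMb : M ≤ b • 1) {S : Finset ι} {i : ι}
    (hi : i ∉ S) :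
    (M.submatrix ((↑) : ↥(insert i S) → ι) (↑)).det ∈
      Set.Icc (a * (M.submatrix ((↑) : S → ι) (↑)).det)
        (b * (M.submatrix ((↑) : S → ι) (↑)).det) := by
  have hM := posDef_of_smul_one_le ha haM
  set g : S ⊕ Unit → ι := Sum.elim (↑) fun _ => i
  have hg : Function.Injective g :=
    Subtype.val_injective.sumElim (fun _ _ _ => rfl) fun x _ hx => hi (hx ▸ x.2)
  have hdet : (M.submatrix ((↑) : ↥(insert i S) → ι) (↑)).det = (M.submatrix g g).det := by
    let e : S ⊕ Unit ≃ ↥(insert i S) :=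
      ((Finset.subtypeInsertEquivOption hi).trans (Equiv.optionEquivSumPUnit _)).symm
    rw [← det_submatrix_equiv_self e, submatrix_submatrix]
    congr 2 <;> ext (x | x) <;> rfl
  have hblocks := hM.1.submatrix_sumElim ((↑) : S → ι) fun _ : Unit => i
  rw [hdet, hblocks]
  exact ⟨smul_det_le_det_fromBlocks ha (hblocks ▸ smul_one_le_submatrix haM hg),
    det_fromBlocks_le_smul_det (hM.submatrix Subtype.val_injective)
      (hblocks ▸ submatrix_le_smul_one hMb hg)⟩

end Matrix

namespace Finset

variable {ι κ β : Type*}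

lemma expect_union [DecidableEq β] {G₀ G₁ : Finset β} (h : Disjoint G₀ G₁) (g : β → ℝ) :
    𝔼 x ∈ G₀ ∪ G₁, g x = (#G₀ * 𝔼 x ∈ G₀, g x + #G₁ * 𝔼 x ∈ G₁, g x) / #(G₀ ∪ G₁) := by
  rw [expect_eq_sum_div_card, sum_union h, ← card_mul_expect G₀, ← card_mul_expect G₁]

lemma expect_sigma_of_card_eq {s : Finset ι} {t : ι → Finset κ} {c : ℕ}
    (hc : ∀ i ∈ s, #(t i) = c) (hc₀ : c ≠ 0) (g : ι → ℝ) :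
    𝔼 x ∈ s.sigma t, g x.1 = 𝔼 i ∈ s, g i := by
  have hfiber : ∀ i ∈ s, ∑ _x ∈ t i, g i = c * g i := fun i hi => by
    rw [sum_const, hc i hi, nsmul_eq_mul]
  rw [expect_eq_sum_div_card, expect_eq_sum_div_card, sum_sigma, card_sigma, sum_congr rfl hfiber,
    sum_congr rfl hc, ← mul_sum, sum_const, smul_eq_mul, Nat.cast_mul]
  field_simp

variable [DecidableEq β]

lemma expect_sigma_sdiff_insert (t : Finset β) (m : ℕ) (f : Finset β → ℝ) :
    𝔼 x ∈ (powersetCard m t).sigma (t \ ·), f (insert x.2 x.1) =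
      𝔼 B ∈ powersetCard (m + 1) t, f B := by
  rw [← expect_sigma_of_card_eq (t := id) (c := m + 1) (fun B hB => (mem_powersetCard.1 hB).2)
    m.succ_ne_zero]
  refine expect_nbij' (fun x => ⟨insert x.2 x.1, x.2⟩) (fun x => ⟨x.1.erase x.2, x.2⟩) ?_ ?_ ?_ ?_
    fun _ _ => rfl
  · rintro ⟨A, j⟩ hx
    simp only [mem_sigma, mem_powersetCard, mem_sdiff, id] at hx ⊢
    exact ⟨⟨insert_subset hx.2.1 hx.1.1, by rw [card_insert_of_notMem hx.2.2, hx.1.2]⟩,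
      mem_insert_self _ _⟩
  · rintro ⟨B, j⟩ hx
    simp only [mem_sigma, mem_powersetCard, mem_sdiff, id] at hx ⊢
    exact ⟨⟨(erase_subset _ _).trans hx.1.1, by rw [card_erase_of_mem hx.2, hx.1.2]; rfl⟩,
      hx.1.1 hx.2, notMem_erase _ _⟩
  · rintro ⟨A, j⟩ hx
    simp only [mem_sigma, mem_sdiff] at hx
    simp [erase_insert hx.2.2]
  · rintro ⟨B, j⟩ hx
    simp only [mem_sigma, id] at hx
    simp [insert_erase hx.2]

lemma abs_expect_powersetCard_succ_sub_le {t : Finset β} {m : ℕ} (hm : m < #t)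
    {f g : Finset β → ℝ} {L : ℝ}
    (h : ∀ A ∈ powersetCard m t, ∀ j ∈ t \ A, |f (insert j A) - g A| ≤ L) :
    |𝔼 B ∈ powersetCard (m + 1) t, f B - 𝔼 A ∈ powersetCard m t, g A| ≤ L := by
  have hfiber : ∀ A ∈ powersetCard m t, #(t \ A) = #t - m := fun A hA => by
    rw [card_sdiff_of_subset (mem_powersetCard.1 hA).1, (mem_powersetCard.1 hA).2]
  obtain ⟨A, hA⟩ := powersetCard_nonempty.2 hm.le
  obtain ⟨j, hj⟩ : (t \ A).Nonempty := card_pos.1 (by rw [hfiber A hA]; omega)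
  -- both means are means over the pairs `(A, j)` with `j ∈ t \ A`
  rw [← expect_sigma_sdiff_insert, ← expect_sigma_of_card_eq hfiber (by omega) g,
    ← expect_sub_distrib]
  exact (abs_expect_le _ _).trans <| expect_le ⟨⟨A, j⟩, mem_sigma.2 ⟨hA, hj⟩⟩ fun x hx =>
    h x.1 (mem_sigma.1 hx).1 x.2 (mem_sigma.1 hx).2

end Finset

section UniformVar

variable {β : Type*} {G G₀ G₁ : Finset β}

noncomputable def uniformVar (G : Finset β) (f : β → ℝ) : ℝ :=
  𝔼 x ∈ G, (f x - 𝔼 y ∈ G, f y) ^ 2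

lemma expect_sq_sub_eq (hG : G.Nonempty) (f : β → ℝ) (c : ℝ) :
    𝔼 x ∈ G, (f x - c) ^ 2 = uniformVar G f + (𝔼 x ∈ G, f x - c) ^ 2 := by
  have hdev : 𝔼 x ∈ G, (f x - 𝔼 y ∈ G, f y) = 0 := by
    rw [expect_sub_distrib, expect_const hG, sub_self]
  have hsplit : ∀ x, (f x - c) ^ 2 = (f x - 𝔼 y ∈ G, f y) ^ 2
      + 2 * (𝔼 y ∈ G, f y - c) * (f x - 𝔼 y ∈ G, f y) + (𝔼 y ∈ G, f y - c) ^ 2 := fun x => by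
    ring
  simp_rw [hsplit, expect_add_distrib, ← mul_expect, hdev, expect_const hG, mul_zero, add_zero]
  rfl

lemma uniformVar_union [DecidableEq β] (h : Disjoint G₀ G₁) (h₀ : G₀.Nonempty) (h₁ : G₁.Nonempty)
    (f : β → ℝ) :
    uniformVar (G₀ ∪ G₁) f = (#G₀ * uniformVar G₀ f + #G₁ * uniformVar G₁ f) / #(G₀ ∪ G₁) +
      #G₀ * #G₁ * (𝔼 x ∈ G₀, f x - 𝔼 x ∈ G₁, f x) ^ 2 / #(G₀ ∪ G₁) ^ 2 := by
  have hN₀ : (0 : ℝ) < #G₀ := by exact_mod_cast h₀.card_pos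
  have hN₁ : (0 : ℝ) < #G₁ := by exact_mod_cast h₁.card_pos
  have hN : (#(G₀ ∪ G₁) : ℝ) = #G₀ + #G₁ := by exact_mod_cast card_union_of_disjoint h
  rw [uniformVar, expect_union h, expect_sq_sub_eq h₀, expect_sq_sub_eq h₁, expect_union h, hN]
  field_simp
  ring

lemma uniformVar_image [DecidableEq β] {γ : Type*} {G : Finset γ} {g : γ → β}
    (hg : Set.InjOn g G) (f : β → ℝ) :
    uniformVar (G.image g) f = uniformVar G fun x => f (g x) := by
  simp only [uniformVar, expect_image hg]

lemma uniformVar_singleton (x : β) (f : β → ℝ) : uniformVar {x} f = 0 := by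
  simp [uniformVar]

lemma uniformVar_mul_add (G : Finset β) (f : β → ℝ) (a b : ℝ) :
    uniformVar G (fun x => a * f x + b) = a ^ 2 * uniformVar G f := by
  rcases G.eq_empty_or_nonempty with rfl | hG
  · simp [uniformVar]
  have hmean : 𝔼 x ∈ G, (a * f x + b) = a * 𝔼 x ∈ G, f x + b := by
    rw [expect_add_distrib, mul_expect, expect_const hG]
  simp only [uniformVar]
  rw [mul_expect, hmean]
  exact expect_congr rfl fun x _ => by ring

lemma uniformVar_powersetCard_succ_insert [DecidableEq β] {a : β} {t : Finset β} (ha : a ∉ t)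
    {m : ℕ} (hm : m < #t) (f : Finset β → ℝ) :
    uniformVar (powersetCard (m + 1) (insert a t)) f =
      ((#t - m) * uniformVar (powersetCard (m + 1) t) f +
          (m + 1) * uniformVar (powersetCard m t) (fun A => f (insert a A))) / (#t + 1) +
        (#t - m) * (m + 1) *
          (𝔼 B ∈ powersetCard (m + 1) t, f B - 𝔼 A ∈ powersetCard m t, f (insert a A)) ^ 2 /
          (#t + 1) ^ 2 := by
  have haA : ∀ A ∈ powersetCard m t, a ∉ A := fun A hA h => ha ((mem_powersetCard.1 hA).1 h)
  have hinj : Set.InjOn (insert a) (powersetCard m t : Set (Finset β)) := fun A hA B hB h => by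
    rw [← erase_insert (haA A hA), h, erase_insert (haA B hB)]
  have hdisj : Disjoint (powersetCard (m + 1) t) ((powersetCard m t).image (insert a)) := by
    refine disjoint_left.2 fun B hB hB' => ?_
    obtain ⟨A, -, rfl⟩ := mem_image.1 hB'
    exact ha ((mem_powersetCard.1 hB).1 (mem_insert_self a A))
  have hN : #(powersetCard (m + 1) t ∪ (powersetCard m t).image (insert a)) =
      (#t + 1).choose (m + 1) := by
    rw [← powersetCard_succ_insert ha, card_powersetCard, card_insert_of_notMem ha]
  have hN₀ : ((#t).choose (m + 1) : ℝ) = (#t + 1).choose (m + 1) * (#t - m) / (#t + 1) := by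
    have := Nat.choose_mul_succ_eq #t (m + 1)
    rw [show #t + 1 - (m + 1) = #t - m by omega] at this
    rw [eq_div_iff (by positivity), ← Nat.cast_sub hm.le]
    exact_mod_cast this
  have hN₁ : ((#t).choose m : ℝ) = (#t + 1).choose (m + 1) * (m + 1) / (#t + 1) := by
    rw [eq_div_iff (by positivity), mul_comm]
    exact_mod_cast Nat.add_one_mul_choose_eq #t m
  have hNpos : (0 : ℝ) < (#t + 1).choose (m + 1) := by exact_mod_cast Nat.choose_pos (by omega)
  rw [powersetCard_succ_insert ha, uniformVar_union hdisj (powersetCard_nonempty.2 hm)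
    ((powersetCard_nonempty.2 hm.le).image _), uniformVar_image hinj, expect_image hinj,
    card_image_of_injOn hinj, hN, card_powersetCard, card_powersetCard, hN₀, hN₁]
  field_simp

end UniformVar

section BoundedSwaps

variable {α : Type*} [DecidableEq α]

def BoundedSwaps (s : Finset α) (f : Finset α → ℝ) (L : ℝ) : Prop :=
  ∀ A ⊆ s, ∀ i ∈ s \ A, ∀ j ∈ s \ A, |f (insert i A) - f (insert j A)| ≤ L

variable {a : α} {t : Finset α} {f : Finset α → ℝ} {L : ℝ}

lemma BoundedSwaps.of_insert (hf : BoundedSwaps (insert a t) f L) : BoundedSwaps t f L :=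
  fun A hA i hi j hj => hf A (hA.trans (subset_insert a t))
    i (sdiff_subset_sdiff (subset_insert a t) le_rfl hi)
    j (sdiff_subset_sdiff (subset_insert a t) le_rfl hj)

lemma BoundedSwaps.insert_left (ha : a ∉ t) (hf : BoundedSwaps (insert a t) f L) :
    BoundedSwaps t (fun A => f (insert a A)) L := by
  intro A hA i hi j hj
  have hmem : ∀ i ∈ t \ A, i ∈ insert a t \ insert a A := fun i hi => by
    simp only [mem_sdiff, mem_insert] at hi ⊢
    exact ⟨Or.inr hi.1, fun h => h.elim (fun h => ha (h ▸ hi.1)) hi.2⟩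
  simpa only [insert_comm a] using
    hf (insert a A) (insert_subset_insert a hA) i (hmem i hi) j (hmem j hj)

lemma BoundedSwaps.abs_insert_sub_insert_le (ha : a ∉ t) (hf : BoundedSwaps (insert a t) f L)
    {A : Finset α} (hA : A ⊆ t) {j : α} (hj : j ∈ t \ A) :
    |f (insert j A) - f (insert a A)| ≤ L :=
  hf A (hA.trans (subset_insert a t)) j (sdiff_subset_sdiff (subset_insert a t) le_rfl hj)
    a (mem_sdiff.2 ⟨mem_insert_self a t, fun h => ha (hA h)⟩)

lemma variance_recursion_le {x m V₀ V₁ D L : ℝ} (hm : 0 ≤ m) (hmx : m + 1 ≤ x)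
    (hV₀ : V₀ ≤ (m + 1) * (x - (m + 1)) / x * L ^ 2) (hV₁ : V₁ ≤ m * (x - m) / x * L ^ 2)
    (hD : D ^ 2 ≤ L ^ 2) :
    ((x - m) * V₀ + (m + 1) * V₁) / (x + 1) + (x - m) * (m + 1) * D ^ 2 / (x + 1) ^ 2 ≤
      (m + 1) * (x + 1 - (m + 1)) / (x + 1) * L ^ 2 := by
  have hx : 0 < x := by linarith
  have hxm : 0 ≤ x - m := by linarith
  calc ((x - m) * V₀ + (m + 1) * V₁) / (x + 1) + (x - m) * (m + 1) * D ^ 2 / (x + 1) ^ 2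
      ≤ ((x - m) * ((m + 1) * (x - (m + 1)) / x * L ^ 2) + (m + 1) * (m * (x - m) / x * L ^ 2))
          / (x + 1) + (x - m) * (m + 1) * L ^ 2 / (x + 1) ^ 2 := by
        gcongr
    _ = (m + 1) * (x + 1 - (m + 1)) / (x + 1) * L ^ 2
        - (m + 1) * (x - m) * L ^ 2 / (x * (x + 1) ^ 2) := by
      field_simp
      ring
    _ ≤ (m + 1) * (x + 1 - (m + 1)) / (x + 1) * L ^ 2 := by
      have : 0 ≤ (m + 1) * (x - m) * L ^ 2 / (x * (x + 1) ^ 2) := by positivity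
      linarith

theorem uniformVar_powersetCard_le {s : Finset α} {f : Finset α → ℝ} {L : ℝ}
    (hf : BoundedSwaps s f L) {k : ℕ} (hk : k ≤ #s) :
    uniformVar (powersetCard k s) f ≤ k * (#s - k) / #s * L ^ 2 := by
  induction s using Finset.induction_on generalizing k f with
  | empty =>
    obtain rfl : k = 0 := by simpa using hk
    simp [uniformVar_singleton]
  | @insert a t ha ih =>
    rcases k with _ | m
    · simp [uniformVar_singleton]
    obtain hk | hk := hk.lt_or_eq
    swap
    · simp [hk, uniformVar_singleton]
    rw [card_insert_of_notMem ha, Nat.add_lt_add_iff_right] at hk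
    have hV₀ := ih hf.of_insert (k := m + 1) hk
    have hV₁ := ih (hf.insert_left ha) hk.le
    have hD := abs_expect_powersetCard_succ_sub_le hk fun A hA j hj =>
      hf.abs_insert_sub_insert_le ha (mem_powersetCard.1 hA).1 hj
    rw [uniformVar_powersetCard_succ_insert ha hk, card_insert_of_notMem ha]
    push_cast at hV₀ hV₁ ⊢
    exact variance_recursion_le m.cast_nonneg (by exact_mod_cast hk) hV₀ hV₁
      (sq_abs (_ : ℝ) ▸ pow_le_pow_left₀ (abs_nonneg _) hD 2)

end BoundedSwaps

section LogMinor

variable {n : ℕ} {M : Matrix (Fin n) (Fin n) ℝ}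

lemma minEig_smul_one_le (hM : M.IsHermitian) : minEig hM • 1 ≤ M :=
  hM.smul_one_le fun i => ciInf_le (Set.finite_range _).bddBelow i

lemma le_maxEig_smul_one (hM : M.IsHermitian) : M ≤ maxEig hM • 1 :=
  hM.le_smul_one fun i => le_ciSup (Set.finite_range _).bddAbove i

lemma minEig_le_maxEig [Nonempty (Fin n)] (hM : M.IsHermitian) : minEig hM ≤ maxEig hM :=
  ciInf_le_ciSup (Set.finite_range _).bddBelow (Set.finite_range _).bddAbove

lemma minEig_pos [Nonempty (Fin n)] (hM : M.PosDef) : 0 < minEig hM.1 := by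
  obtain ⟨i, hi⟩ := exists_eq_ciInf_of_finite (f := hM.1.eigenvalues)
  rw [minEig, ← hi]
  exact hM.eigenvalues_pos i

lemma logMinor_insert_sub_mem_Icc (hM : M.PosDef) {S : Finset (Fin n)} {i : Fin n} (hi : i ∉ S) :
    logMinor M (insert i S) - logMinor M S ∈ Set.Icc (log (minEig hM.1)) (log (maxEig hM.1)) := by
  have : Nonempty (Fin n) := ⟨i⟩
  have ha := minEig_pos hM
  have hb := ha.trans_le (minEig_le_maxEig hM.1)
  obtain ⟨hlo, hhi⟩ :=
    det_submatrix_insert_mem_Icc ha (minEig_smul_one_le hM.1) (le_maxEig_smul_one hM.1) hi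
  have hS := (hM.submatrix (Subtype.val_injective (p := (· ∈ S)))).det_pos
  have hT := (mul_pos ha hS).trans_le hlo
  unfold logMinor
  constructor
  · rw [le_sub_iff_add_le, ← log_mul ha.ne' hS.ne']
    exact log_le_log (mul_pos ha hS) hlo
  · rw [sub_le_iff_le_add, ← log_mul hb.ne' hS.ne']
    exact log_le_log hT hhi

lemma one_le_condNum [Nonempty (Fin n)] (hM : M.PosDef) : 1 ≤ condNum hM.1 :=
  (one_le_div (minEig_pos hM)).2 (minEig_le_maxEig hM.1)

lemma boundedSwaps_logMinor (hM : M.PosDef) :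
    BoundedSwaps univ (logMinor M) (log (condNum hM.1)) := by
  intro A _ i hi j hj
  have : Nonempty (Fin n) := ⟨i⟩
  obtain ⟨hi₁, hi₂⟩ := logMinor_insert_sub_mem_Icc hM (mem_sdiff.1 hi).2
  obtain ⟨hj₁, hj₂⟩ := logMinor_insert_sub_mem_Icc hM (mem_sdiff.1 hj).2
  rw [condNum, log_div ((minEig_pos hM).trans_le (minEig_le_maxEig hM.1)).ne' (minEig_pos hM).ne',
    abs_le]
  constructor <;> linarith

lemma card_mul_log_minEig_le_logMinor (hM : M.PosDef) (S : Finset (Fin n)) :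
    #S * log (minEig hM.1) ≤ logMinor M S := by
  induction S using Finset.induction_on with
  | empty => simp [logMinor]
  | insert i S hi ih =>
    rw [card_insert_of_notMem hi, Nat.cast_succ]
    linarith [(logMinor_insert_sub_mem_Icc hM hi).1]

lemma ellM_eq_log_minEig [Nonempty (Fin n)] {hM : M.IsHermitian} (hmin : 1 ≤ minEig hM) :
    ellM hM = log (minEig hM) := by
  have hlog := log_le_log (by linarith) (minEig_le_maxEig hM)
  rw [ellM, abs_of_nonneg (log_nonneg hmin), abs_of_nonneg ((log_nonneg hmin).trans hlog),
    min_eq_right hlog]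

end LogMinor

section Entropy

variable {n : ℕ} (k : ℕ) (M : Matrix (Fin n) (Fin n) ℝ)

lemma card_powersetCard_univ_fin :
    (#(powersetCard k (univ : Finset (Fin n))) : ℝ) = n.choose k := by
  rw [card_powersetCard, card_univ, Fintype.card_fin]

lemma meanEnt_eq_expect : meanEnt k M = 𝔼 s ∈ powersetCard k univ, entMinor k M s := by
  rw [meanEnt, expect_eq_sum_div_card, card_powersetCard_univ_fin]

lemma varEnt_eq_uniformVar_logMinor :
    varEnt k M = uniformVar (powersetCard k univ) (logMinor M) / 4 := by
  calc varEnt k M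
      = uniformVar (powersetCard k univ)
          (fun s => 1 / 2 * logMinor M s + (k : ℝ) / 2 * (1 + log (2 * π))) := by
        rw [varEnt, uniformVar, expect_eq_sum_div_card, card_powersetCard_univ_fin,
          meanEnt_eq_expect]
        rfl
    _ = uniformVar (powersetCard k univ) (logMinor M) / 4 := by
      rw [uniformVar_mul_add]
      ring

lemma log_two_mul_exp_one_mul_pi : log (2 * exp 1 * π) = 1 + log (2 * π) := by
  rw [mul_right_comm, log_mul (by positivity) (exp_ne_zero 1), log_exp, add_comm]

variable {k M}

lemma varEnt_le (hM : M.PosDef) (hkn : k ≤ n) :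
    varEnt k M ≤ k * (n - k) / n * log (condNum hM.1) ^ 2 / 4 := by
  have := uniformVar_powersetCard_le (boundedSwaps_logMinor hM) (k := k) (by simpa using hkn)
  rw [card_univ, Fintype.card_fin] at this
  rw [varEnt_eq_uniformVar_logMinor]
  linarith

lemma mul_le_meanEnt (hM : M.PosDef) (hkn : k ≤ n) :
    k * (log (minEig hM.1) + log (2 * exp 1 * π)) / 2 ≤ meanEnt k M := by
  rw [meanEnt_eq_expect]
  refine le_expect (powersetCard_nonempty.2 (by simpa using hkn)) fun s hs => ?_
  have h := card_mul_log_minEig_le_logMinor hM s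
  rw [(mem_powersetCard.1 hs).2] at h
  rw [entMinor, log_two_mul_exp_one_mul_pi]
  linarith

end Entropy

lemma sqrt_var_div_mean_le {V E Λ c k n q : ℝ} (hk : 0 < k) (hkn : k ≤ n) (hq : 0 ≤ q) (hc : 0 < c)
    (hΛ : 0 ≤ Λ) (hV : V ≤ k * (n - k) / n * Λ ^ 2 / 4) (hE : k * c / 2 ≤ E) :
    √(V / q) / E ≤ 2 * Λ / c * √(6 * (n - k) / (q * k * n)) := by
  have hX : 0 ≤ (n - k) / (q * k * n) :=
    div_nonneg (by linarith) (mul_nonneg (mul_nonneg hq hk.le) (hk.le.trans hkn))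
  have hsq : k * (n - k) / n * Λ ^ 2 / 4 / q = (k * Λ / 2) ^ 2 * ((n - k) / (q * k * n)) := by
    field_simp
    ring
  calc √(V / q) / E ≤ √(k * (n - k) / n * Λ ^ 2 / 4 / q) / (k * c / 2) :=
        div_le_div₀ (sqrt_nonneg _) (sqrt_le_sqrt (div_le_div_of_nonneg_right hV hq))
          (by positivity) hE
    _ = Λ / c * √((n - k) / (q * k * n)) := by
      rw [hsq, sqrt_mul (sq_nonneg _), sqrt_sq (by positivity)]
      field_simp
    _ ≤ 2 * Λ / c * √(6 * (n - k) / (q * k * n)) := by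
      rw [mul_div_assoc 6]
      exact mul_le_mul (by gcongr; linarith) (sqrt_le_sqrt (by linarith)) (sqrt_nonneg _)
        (by positivity)

theorem cv_entropy_bound_one_general {n k : ℕ} (hk1 : 1 ≤ k) (hkn : k < n)
    (q : ℕ)
    (M : Matrix (Fin n) (Fin n) ℝ) (hM : M.PosDef)
    (hmin : 1 ≤ minEig hM.1)
    (khat : ℝ) (hcond : condNum hM.1 ≤ khat) :
    Real.sqrt (varEnt k M / q) / meanEnt k M ≤
      (2 * Real.log khat / (ellM hM.1 + Real.log (2 * Real.exp 1 * Real.pi))) *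
        Real.sqrt (6 * ((n : ℝ) - (k : ℝ)) / ((q : ℝ) * (k : ℝ) * (n : ℝ))) := by
  have : Nonempty (Fin n) := ⟨⟨0, by omega⟩⟩
  have hκ := one_le_condNum hM
  have hlogκ : log (condNum hM.1) ≤ log khat := log_le_log (by linarith) hcond
  have hnk : (k : ℝ) ≤ n := by exact_mod_cast hkn.le
  have hvar : varEnt k M ≤ k * (n - k) / n * log khat ^ 2 / 4 := by
    refine (varEnt_le hM hkn.le).trans ?_
    have : 0 ≤ (n : ℝ) - k := sub_nonneg.2 hnk
    gcongr
    exact log_nonneg hκ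
  have hc : 0 < log (2 * exp 1 * π) := log_pos (by nlinarith [pi_gt_three, exp_one_gt_d9])
  rw [ellM_eq_log_minEig hmin]
  exact sqrt_var_div_mean_le (by exact_mod_cast hk1) hnk q.cast_nonneg
    (by linarith [log_nonneg hmin]) ((log_nonneg hκ).trans hlogκ) hvar (mul_le_meanEnt hM hkn.le)

theorem cv_entropy_bound_one {n k : ℕ} (hn : 2 ≤ n) (hk1 : 1 ≤ k) (hkn : k < n)
    (q : ℕ) (hq : 1 ≤ q)
    (M : Matrix (Fin n) (Fin n) ℝ) (hM : M.PosDef)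
    (hmin : 1 ≤ minEig hM.1) (hell : 0 < ellM hM.1)
    (khat : ℝ) (hkhat : 1 < khat) (hcond : condNum hM.1 ≤ khat) :
    Real.sqrt (varEnt k M / q) / meanEnt k M ≤
      (2 * Real.log khat / (ellM hM.1 + Real.log (2 * Real.exp 1 * Real.pi))) *
        Real.sqrt (6 * ((n : ℝ) - (k : ℝ)) / ((q : ℝ) * (k : ℝ) * (n : ℝ))) :=
  cv_entropy_bound_one_general hk1 hkn q M hM hmin khat hcond
end
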